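/- arXiv:1111.4722 — 2 statements merged into one kernel-verified Lean document; each statement's English description precedes it below -/
import Mathlib

section
/- Let n ≥ 5 and fix a pair of indices i ≠ j in {1,…,n}. Suppose the parameter collection c satisfies condition (C1): c_i^{kj} c_j^{li} ≠ c_j^{ki} c_i^{lj} for all k ≠ l with k,l ∉ {i,j}. Let a = (a_1,…,a_n) ∈ ℝ^n be a unit vector with a_i = a_j = 0, with a_k ≠ 0 for every k ∉ {i,j}, satisfying the two linear equations Σ_{k∉{i,j}} c_i^{kj} a_k = 0 and Σ_{k∉{i,j}} c_j^{ki} a_k = 0, and such that for every p ∉ {i,j} at least one of Σ_{k∉{i,j}} c_p^{ki} a_k ≠ 0 or Σ_{k∉{i,j}} c_p^{kj} a_k ≠ 0 holds. Then there exist T > 0 and a continuous map ξ : (0,T) → ℝ^n \ {0} with ξ(t) → a as t → 0⁺, such that for every t ∈ (0,T) one has rank P(ξ(t), tc) ≤ n−2, i.e., ξ(t) ∈ Σ_sing(tc). -/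
open Matrix

/-- A parameter collection: `c i k j` denotes `c_i^{kj}`, symmetric in the two
superscripts, with normalizations `c_i^{ii} = 1` and `c_i^{jj} = 0` for `i ≠ j`. -/
def IsParamColl (n : ℕ) (c : Fin n → Fin n → Fin n → ℝ) : Prop :=
  (∀ i j k : Fin n, j ≠ k → c i k j = c i j k) ∧
  (∀ i : Fin n, c i i i = 1) ∧
  (∀ i j : Fin n, i ≠ j → c i j j = 0)

/-- The principal symbol `P(ξ, c) = Σ_k ξ_k A^k`, where `(A^k)_{ij} = c_i^{kj}`. -/
def pSymb {n : ℕ} (ξ : Fin n → ℝ) (c : Fin n → Fin n → Fin n → ℝ) :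
    Matrix (Fin n) (Fin n) ℝ :=
  Matrix.of fun i j => ∑ k, ξ k * c i k j

/-- The scaled parameter collection `t • c` (normalized entries unchanged). -/
def pScale {n : ℕ} (t : ℝ) (c : Fin n → Fin n → Fin n → ℝ) :
    Fin n → Fin n → Fin n → ℝ :=
  fun i k j => if k = j then c i k j else t * c i k j

/-!
Write `ξ = σ_t ζ` with `σ_t = t` on `{i, j}` and `1` elsewhere. Then
`P(ξ, tc) = diag σ_t · M(t, ζ)`, where `M` (the symbol with rows `i, j` divided by `t`) is
polynomial in `(t, ζ)`; at `t = 0` it is diagonal, equal to `ζ`, on the complement `S` of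
`{i, j}` and vanishes on `S × {i, j}`. While `M_SS` is invertible, `rank M ≤ n - 2` amounts to
the vanishing of the `2 × 2` Schur complement of `M_SS`: four polynomial equations. Take as
unknowns the entries `ζ_i, ζ_j, ζ_k, ζ_l` for two more indices `k ≠ l`. At `t = 0` the equations
read `(∏_S ζ) · (δ_pq ζ_p + P(ζ|_S, c)_pq) = 0` for `p, q ∈ {i, j}`. They hold at `ζ = a`, once
`ζ_i, ζ_j` are chosen to kill the diagonal ones, by the two linear equations on `a`; and their
Jacobian in the unknowns is block triangular, the block of the off-diagonal equations in
`ζ_k, ζ_l` being `[[c_i^{kj}, c_i^{lj}], [c_j^{ki}, c_j^{li}]]`, invertible by (C1). The implicit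
function theorem then yields the branch `ζ(t)`.
-/

open Filter Topology

namespace Matrix

variable {ι R : Type*} [DecidableEq ι]

/-- The Schur complement of the block `M[s, s]`, multiplied by its determinant so that it is
polynomial in the entries of `M`. -/
def adjSchur [CommRing R] (M : Matrix ι ι R) (s : Finset ι) : Matrix ι ι R :=
  (M.submatrix (Subtype.val : s → ι) Subtype.val).det • M -
    M.submatrix id (Subtype.val : s → ι) *
      (M.submatrix (Subtype.val : s → ι) Subtype.val).adjugate *
      -- without the ascription the last product elaborates with `CStarMatrix` multiplication
      (M.submatrix Subtype.val id : Matrix s ι R)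

theorem adjSchur_apply_of_forall_eq_zero [CommRing R] {M : Matrix ι ι R} {s : Finset ι}
    {q : ι} (hq : ∀ r ∈ s, M r q = 0) (p : ι) :
    M.adjSchur s p q = (M.submatrix (Subtype.val : s → ι) Subtype.val).det * M p q := by
  simp [adjSchur, Matrix.mul_apply, hq]

theorem rank_le_card_of_adjSchur_eq_zero [Fintype ι] [Field R] {M : Matrix ι ι R}
    {s : Finset ι} (hN : (M.submatrix (Subtype.val : s → ι) Subtype.val).det ≠ 0)
    (hM : ∀ p ∉ s, ∀ q ∉ s, M.adjSchur s p q = 0) : M.rank ≤ s.card := by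
  set N := M.submatrix (Subtype.val : s → ι) Subtype.val
  set B := M.submatrix id (Subtype.val : s → ι)
  set C := M.submatrix (Subtype.val : s → ι) id
  -- the entries of `B N⁻¹ C` in a row or column through `s` are those of `M` trivially, and the
  -- others are those of `M` by the vanishing of the Schur complement
  have hfac : M = B * (N⁻¹ * C) := by
    ext p q
    by_cases hp : p ∈ s
    · change M p q = (N * (N⁻¹ * C)) ⟨p, hp⟩ q
      rw [← Matrix.mul_assoc, N.mul_nonsing_inv (isUnit_iff_ne_zero.mpr hN), Matrix.one_mul]
      rfl
    by_cases hq : q ∈ s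
    · rw [← Matrix.mul_assoc]
      change M p q = ((B * N⁻¹) * N) p ⟨q, hq⟩
      rw [Matrix.mul_assoc, N.nonsing_inv_mul (isUnit_iff_ne_zero.mpr hN), Matrix.mul_one]
      rfl
    have h : N.det * M p q = (B * N.adjugate * C) p q := sub_eq_zero.mp (hM p hp q hq)
    rw [Matrix.inv_def, Ring.inverse_eq_inv', Matrix.smul_mul, Matrix.mul_smul,
      ← Matrix.mul_assoc, Matrix.smul_apply, ← h, smul_eq_mul, inv_mul_cancel_left₀ hN]
  rw [hfac, ← Fintype.card_coe s]
  exact (rank_mul_le_left B _).trans (rank_le_card_width B)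

end Matrix

section Smooth

variable {𝕜 E ι : Type*} [NontriviallyNormedField 𝕜] [NormedAddCommGroup E] [NormedSpace 𝕜 E]
  [DecidableEq ι] {m : WithTop ℕ∞} {M : E → Matrix ι ι 𝕜}

theorem contDiff_det_of_entries [Fintype ι] (hM : ∀ p q, ContDiff 𝕜 m fun x => M x p q) :
    ContDiff 𝕜 m fun x => (M x).det := by
  simp only [det_apply, Units.smul_def, zsmul_eq_mul]
  fun_prop

theorem contDiff_adjugate_of_entries [Fintype ι] (hM : ∀ p q, ContDiff 𝕜 m fun x => M x p q)
    (p q : ι) : ContDiff 𝕜 m fun x => (M x).adjugate p q := by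
  simp only [adjugate_apply]
  refine contDiff_det_of_entries fun r s => ?_
  by_cases hr : r = q
  · simp [updateRow_apply, hr, contDiff_const]
  · simpa [updateRow_apply, hr] using hM r s

theorem contDiff_adjSchur_of_entries (hM : ∀ p q, ContDiff 𝕜 m fun x => M x p q)
    (s : Finset ι) (p q : ι) : ContDiff 𝕜 m fun x => (M x).adjSchur s p q := by
  have hN := contDiff_det_of_entries
    (M := fun x => (M x).submatrix (Subtype.val : s → ι) Subtype.val) fun r r' => hM r r'
  have hA := contDiff_adjugate_of_entries
    (M := fun x => (M x).submatrix (Subtype.val : s → ι) Subtype.val) fun r r' => hM r r'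
  simp only [adjSchur, Matrix.sub_apply, Matrix.smul_apply, smul_eq_mul, Matrix.mul_apply,
    submatrix_apply, id]
  fun_prop

end Smooth

theorem ContinuousLinearMap.isInvertible_of_injective {𝕜 E F : Type*}
    [NontriviallyNormedField 𝕜] [CompleteSpace 𝕜]
    [NormedAddCommGroup E] [NormedSpace 𝕜 E] [FiniteDimensional 𝕜 E]
    [NormedAddCommGroup F] [NormedSpace 𝕜 F] [FiniteDimensional 𝕜 F]
    {f : E →L[𝕜] F} (hf : Function.Injective f)
    (hdim : Module.finrank 𝕜 E = Module.finrank 𝕜 F) : f.IsInvertible :=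
  ⟨((f : E →ₗ[𝕜] F).linearEquivOfInjective hf hdim).toContinuousLinearEquiv, rfl⟩

theorem ContDiffAt.exists_eventually_continuousAt_implicit {𝕜 E₁ E₂ F : Type*} [RCLike 𝕜]
    [NormedAddCommGroup E₁] [NormedSpace 𝕜 E₁] [CompleteSpace E₁]
    [NormedAddCommGroup E₂] [NormedSpace 𝕜 E₂] [CompleteSpace E₂]
    [NormedAddCommGroup F] [NormedSpace 𝕜 F] [CompleteSpace F]
    {f : E₁ × E₂ → F} {u : E₁ × E₂} (hf : ContDiffAt 𝕜 1 f u)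
    (hinv : (fderiv 𝕜 f u ∘L .inr 𝕜 E₁ E₂).IsInvertible) :
    ∃ ψ : E₁ → E₂, ψ u.1 = u.2 ∧ ∀ᶠ x in 𝓝 u.1, ContinuousAt ψ x ∧ f (x, ψ x) = f u := by
  refine ⟨hf.implicitFunction one_ne_zero hinv,
    hf.implicitFunction_apply_self one_ne_zero hinv, ?_⟩
  filter_upwards [(hf.contDiffAt_implicitFunction one_ne_zero hinv).eventually (by simp),
    hf.eventually_apply_implicitFunction one_ne_zero hinv] with x hx hfx
  exact ⟨hx.continuousAt, hfx⟩

section Symbol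

variable {n : ℕ} (c : Fin n → Fin n → Fin n → ℝ)

def offPart : Fin n → Fin n → Fin n → ℝ := fun i k j => if k = j then 0 else c i k j

theorem pSymb_apply (ξ : Fin n → ℝ) (p q : Fin n) : pSymb ξ c p q = ∑ k, ξ k * c p k q := rfl

variable {c}

theorem pSymb_pScale (hc : IsParamColl n c) (ξ : Fin n → ℝ) (t : ℝ) :
    pSymb ξ (pScale t c) = diagonal ξ + t • pSymb ξ (offPart c) := by
  ext p q
  have hterm : ∀ k, ξ k * pScale t c p k q
      = (if k = q then ξ k * c p k q else 0) + t * (ξ k * offPart c p k q) := by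
    intro k
    by_cases hk : k = q <;> simp [pScale, offPart, hk]; ring
  have hdiag : ξ q * c p q q = diagonal ξ p q := by
    by_cases hpq : p = q
    · subst hpq; simp [hc.2.1]
    · simp [hc.2.2 p q hpq, hpq]
  simp only [pSymb_apply, hterm, Finset.sum_add_distrib, Finset.sum_ite_eq', Finset.mem_univ,
    if_true, ← Finset.mul_sum, hdiag, Matrix.add_apply, Matrix.smul_apply, smul_eq_mul]

def scaleOn (B : Finset (Fin n)) (t : ℝ) : Fin n → ℝ := fun p => if p ∈ B then t else 1

theorem contDiff_scaleOn_apply (B : Finset (Fin n)) (r : Fin n) :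
    ContDiff ℝ 1 fun t => scaleOn B t r := by
  by_cases hr : r ∈ B <;> simp only [scaleOn, hr, if_true, if_false] <;> fun_prop

theorem continuous_scaleOn (B : Finset (Fin n)) : Continuous (scaleOn B) :=
  continuous_pi fun r => (contDiff_scaleOn_apply B r).continuous

variable (c)

/-- The symbol `P(scaleOn B t * ζ, t c)` with its rows in `B` divided by `t`
(`pSymb_pScale_eq_diagonal_mul`); unlike that quotient, it is polynomial in `t`. -/
def reducedSymb (B : Finset (Fin n)) (t : ℝ) (ζ : Fin n → ℝ) : Matrix (Fin n) (Fin n) ℝ :=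
  diagonal ζ + diagonal (scaleOn Bᶜ t) * pSymb (scaleOn B t * ζ) (offPart c)

theorem reducedSymb_apply (B : Finset (Fin n)) (t : ℝ) (ζ : Fin n → ℝ) (p q : Fin n) :
    reducedSymb c B t ζ p q
      = (if p = q then ζ p else 0) +
          scaleOn Bᶜ t p * pSymb (scaleOn B t * ζ) (offPart c) p q := by
  simp [reducedSymb, diagonal_apply, diagonal_mul]

theorem reducedSymb_zero_apply_of_notMem {B : Finset (Fin n)} {r : Fin n} (hr : r ∉ B)
    (ζ : Fin n → ℝ) (q : Fin n) : reducedSymb c B 0 ζ r q = if r = q then ζ r else 0 := by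
  simp [reducedSymb_apply, scaleOn, hr]

theorem det_reducedSymb_zero_submatrix_compl (B : Finset (Fin n)) (ζ : Fin n → ℝ) :
    ((reducedSymb c B 0 ζ).submatrix (Subtype.val : (Bᶜ : Finset (Fin n)) → Fin n)
      Subtype.val).det = ∏ r ∈ Bᶜ, ζ r := by
  have hblock : (reducedSymb c B 0 ζ).submatrix (Subtype.val : (Bᶜ : Finset (Fin n)) → Fin n)
      Subtype.val = diagonal fun r : (Bᶜ : Finset (Fin n)) => ζ r := by
    ext r r'
    simp only [submatrix_apply, reducedSymb_zero_apply_of_notMem c (Finset.mem_compl.mp r.2),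
      diagonal_apply, Subtype.ext_iff]
  rw [hblock, det_diagonal, Finset.prod_coe_sort Bᶜ ζ]

variable {c}

theorem pSymb_pScale_eq_diagonal_mul (hc : IsParamColl n c) (B : Finset (Fin n)) (t : ℝ)
    (ζ : Fin n → ℝ) :
    pSymb (scaleOn B t * ζ) (pScale t c) = diagonal (scaleOn B t) * reducedSymb c B t ζ := by
  ext p q
  have h : scaleOn B t p * scaleOn Bᶜ t p = t := by
    by_cases hp : p ∈ B <;> simp [scaleOn, hp]
  rw [pSymb_pScale hc, diagonal_mul, reducedSymb_apply, Matrix.add_apply, Matrix.smul_apply,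
    diagonal_apply, smul_eq_mul, mul_add, ← mul_assoc, h]
  by_cases hpq : p = q <;> simp [hpq]

end Symbol

section Branch

variable {n : ℕ} (c : Fin n → Fin n → Fin n → ℝ) (i j k l : Fin n) (a : Fin n → ℝ)

def shiftAt (u : (Fin 2 → ℝ) × (Fin 2 → ℝ)) : Fin n → ℝ :=
  a + ∑ α, u.1 α • Pi.single (![i, j] α) 1 + ∑ γ, u.2 γ • Pi.single (![k, l] γ) 1

theorem continuous_shiftAt : Continuous (shiftAt i j k l a) := by
  unfold shiftAt
  fun_prop

def schurMap (t : ℝ) (u : (Fin 2 → ℝ) × (Fin 2 → ℝ)) : Fin 2 → Fin 2 → ℝ :=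
  fun α β =>
    (reducedSymb c {i, j} t (shiftAt i j k l a u)).adjSchur {i, j}ᶜ (![i, j] α) (![i, j] β)

def schurBlockDet (t : ℝ) (u : (Fin 2 → ℝ) × (Fin 2 → ℝ)) : ℝ :=
  ((reducedSymb c {i, j} t (shiftAt i j k l a u)).submatrix
    (Subtype.val : ({i, j}ᶜ : Finset (Fin n)) → Fin n) Subtype.val).det

theorem contDiff_reducedSymb_shiftAt (p q : Fin n) :
    ContDiff ℝ 1 fun x : ℝ × ((Fin 2 → ℝ) × (Fin 2 → ℝ)) =>
      reducedSymb c {i, j} x.1 (shiftAt i j k l a x.2) p q := by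
  have hscale := contDiff_scaleOn_apply (n := n)
  simp only [reducedSymb_apply, pSymb_apply, shiftAt, Pi.mul_apply, Pi.add_apply,
    Finset.sum_apply, Pi.smul_apply, smul_eq_mul]
  split_ifs <;> fun_prop

theorem contDiff_schurMap :
    ContDiff ℝ 1 fun x : ℝ × ((Fin 2 → ℝ) × (Fin 2 → ℝ)) => schurMap c i j k l a x.1 x.2 :=
  contDiff_pi.2 fun _ => contDiff_pi.2 fun _ =>
    contDiff_adjSchur_of_entries (contDiff_reducedSymb_shiftAt c i j k l a) _ _ _

theorem continuous_schurBlockDet :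
    Continuous fun x : ℝ × ((Fin 2 → ℝ) × (Fin 2 → ℝ)) => schurBlockDet c i j k l a x.1 x.2 :=
  (contDiff_det_of_entries (M := fun x : ℝ × ((Fin 2 → ℝ) × (Fin 2 → ℝ)) =>
    (reducedSymb c {i, j} x.1 (shiftAt i j k l a x.2)).submatrix
      (Subtype.val : ({i, j}ᶜ : Finset (Fin n)) → Fin n) Subtype.val)
    fun r r' => contDiff_reducedSymb_shiftAt c i j k l a r r').continuous

/-- The derivative of `schurMap c i j k l a 0` at `basePoint`, up to the factor
`∏_{r ∉ {i, j}} a r`. -/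
def schurLin : ((Fin 2 → ℝ) × (Fin 2 → ℝ)) →L[ℝ] (Fin 2 → Fin 2 → ℝ) :=
  .pi fun α => .pi fun β =>
    (if α = β then .proj α ∘L .fst ℝ _ _ else 0) +
      ∑ γ, c (![i, j] α) (![k, l] γ) (![i, j] β) • (.proj γ ∘L .snd ℝ _ _)

theorem schurLin_apply (u : (Fin 2 → ℝ) × (Fin 2 → ℝ)) (α β : Fin 2) :
    schurLin c i j k l u α β
      = (if α = β then u.1 α else 0) + ∑ γ, c (![i, j] α) (![k, l] γ) (![i, j] β) * u.2 γ := by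
  by_cases h : α = β <;> simp [schurLin, h]

/-- The `i, j` entries are chosen so that the diagonal Schur entries vanish at `t = 0`. -/
def basePoint : (Fin 2 → ℝ) × (Fin 2 → ℝ) :=
  (fun α => -pSymb a (offPart c) (![i, j] α) (![i, j] α), 0)

variable {c i j k l a}

theorem shiftAt_pair_apply (hij : i ≠ j) (hki : k ≠ i) (hkj : k ≠ j) (hli : l ≠ i)
    (hlj : l ≠ j) (u : (Fin 2 → ℝ) × (Fin 2 → ℝ)) (α : Fin 2) :
    shiftAt i j k l a u (![i, j] α) = a (![i, j] α) + u.1 α := by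
  fin_cases α <;> simp [shiftAt, hij, hij.symm, hki, hkj, hli, hlj]

theorem shiftAt_basePoint_of_notMem {r : Fin n} (hr : r ∉ ({i, j} : Finset (Fin n))) :
    shiftAt i j k l a (basePoint c i j a) r = a r := by
  simp only [Finset.mem_insert, Finset.mem_singleton, not_or] at hr
  simp [shiftAt, basePoint, hr.1, hr.2]

theorem scaleOn_zero_mul_shiftAt (hai : a i = 0) (haj : a j = 0) (hki : k ≠ i) (hkj : k ≠ j)
    (hli : l ≠ i) (hlj : l ≠ j) (u : (Fin 2 → ℝ) × (Fin 2 → ℝ)) :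
    scaleOn {i, j} 0 * shiftAt i j k l a u = a + ∑ γ, u.2 γ • Pi.single (![k, l] γ) 1 := by
  ext r
  by_cases hr : r = i ∨ r = j
  · rcases hr with rfl | rfl <;>
      simp [scaleOn, shiftAt, Pi.single_apply, hai, haj, hki, hkj, hli, hlj]
  · simp only [not_or] at hr
    simp [scaleOn, shiftAt, Pi.single_apply, hr.1, hr.2]

theorem pSymb_offPart_eq_sum_filter (hai : a i = 0) (haj : a j = 0) (p : Fin n) {q : Fin n}
    (hq : q = i ∨ q = j) :
    pSymb a (offPart c) p q
      = ∑ k ∈ Finset.univ.filter (fun k => k ≠ i ∧ k ≠ j), c p k q * a k := by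
  rw [Finset.sum_filter, pSymb_apply]
  refine Finset.sum_congr rfl fun r _ => ?_
  by_cases hr : r ≠ i ∧ r ≠ j
  · have hrq : r ≠ q := by rcases hq with rfl | rfl <;> simp [hr.1, hr.2]
    simp [offPart, hr, hrq, mul_comm]
  · rw [not_and_or, not_not, not_not] at hr
    rcases hr with rfl | rfl <;> simp [hai, haj]

variable (c) in
theorem schurMap_zero (u : (Fin 2 → ℝ) × (Fin 2 → ℝ)) :
    schurMap c i j k l a 0 u = (∏ r ∈ ({i, j}ᶜ : Finset (Fin n)), shiftAt i j k l a u r) •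
      fun α β => reducedSymb c {i, j} 0 (shiftAt i j k l a u) (![i, j] α) (![i, j] β) := by
  ext α β
  have hcol : ∀ r ∈ ({i, j}ᶜ : Finset (Fin n)),
      reducedSymb c {i, j} 0 (shiftAt i j k l a u) r (![i, j] β) = 0 := by
    intro r hr
    rw [Finset.mem_compl] at hr
    rw [reducedSymb_zero_apply_of_notMem c hr, if_neg]
    rintro rfl
    fin_cases β <;> simp at hr
  rw [schurMap, adjSchur_apply_of_forall_eq_zero hcol, det_reducedSymb_zero_submatrix_compl]
  rfl

theorem reducedSymb_zero_shiftAt (hij : i ≠ j) (hai : a i = 0) (haj : a j = 0) (hki : k ≠ i)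
    (hkj : k ≠ j) (hli : l ≠ i) (hlj : l ≠ j) (u : (Fin 2 → ℝ) × (Fin 2 → ℝ)) (α β : Fin 2) :
    reducedSymb c {i, j} 0 (shiftAt i j k l a u) (![i, j] α) (![i, j] β)
      = schurLin c i j k l u α β + pSymb a (offPart c) (![i, j] α) (![i, j] β) := by
  have hα : ![i, j] α ∈ ({i, j} : Finset (Fin n)) := by
    revert α; simp [Fin.forall_fin_two]
  have hαβ : ![i, j] α = ![i, j] β ↔ α = β := by
    fin_cases α <;> fin_cases β <;> simp [hij, hij.symm]
  have hoff : ∀ γ, offPart c (![i, j] α) (![k, l] γ) (![i, j] β)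
      = c (![i, j] α) (![k, l] γ) (![i, j] β) := by
    intro γ
    fin_cases β <;> fin_cases γ <;> simp [offPart, hki, hkj, hli, hlj]
  have hscale : scaleOn ({i, j}ᶜ : Finset (Fin n)) 0 (![i, j] α) = 1 := by
    simp only [scaleOn, Finset.mem_compl, hα, not_true_eq_false, if_false]
  have ha0 : a (![i, j] α) = 0 := by fin_cases α <;> simp [hai, haj]
  rw [reducedSymb_apply, scaleOn_zero_mul_shiftAt hai haj hki hkj hli hlj, schurLin_apply,
    shiftAt_pair_apply hij hki hkj hli hlj, hscale, one_mul]
  simp only [pSymb_apply, Pi.add_apply, Finset.sum_apply, Pi.smul_apply, smul_eq_mul, add_mul,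
    Finset.sum_add_distrib, Finset.sum_mul, Pi.single_apply, mul_ite, mul_one, mul_zero, ite_mul,
    zero_mul, hαβ, ha0, zero_add]
  rw [Finset.sum_comm]
  simp only [Finset.sum_ite_eq', Finset.mem_univ, if_true, hoff, mul_comm (u.2 _)]
  ring

theorem reducedSymb_zero_shiftAt_basePoint (hij : i ≠ j) (hai : a i = 0) (haj : a j = 0)
    (hki : k ≠ i) (hkj : k ≠ j) (hli : l ≠ i) (hlj : l ≠ j)
    (heq1 : ∑ k ∈ Finset.univ.filter (fun k => k ≠ i ∧ k ≠ j), c i k j * a k = 0)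
    (heq2 : ∑ k ∈ Finset.univ.filter (fun k => k ≠ i ∧ k ≠ j), c j k i * a k = 0) (α β : Fin 2) :
    reducedSymb c {i, j} 0 (shiftAt i j k l a (basePoint c i j a)) (![i, j] α) (![i, j] β) = 0 := by
  rw [reducedSymb_zero_shiftAt hij hai haj hki hkj hli hlj, schurLin_apply]
  have hij' := pSymb_offPart_eq_sum_filter (c := c) hai haj i (Or.inr rfl)
  have hji' := pSymb_offPart_eq_sum_filter (c := c) hai haj j (Or.inl rfl)
  fin_cases α <;> fin_cases β <;> simp [basePoint, hij', hji', heq1, heq2]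

theorem hasFDerivAt_schurMap_zero (hij : i ≠ j) (hai : a i = 0) (haj : a j = 0)
    (hki : k ≠ i) (hkj : k ≠ j) (hli : l ≠ i) (hlj : l ≠ j)
    (heq1 : ∑ k ∈ Finset.univ.filter (fun k => k ≠ i ∧ k ≠ j), c i k j * a k = 0)
    (heq2 : ∑ k ∈ Finset.univ.filter (fun k => k ≠ i ∧ k ≠ j), c j k i * a k = 0) :
    HasFDerivAt (schurMap c i j k l a 0)
      ((∏ r ∈ ({i, j}ᶜ : Finset (Fin n)), a r) • schurLin c i j k l) (basePoint c i j a) := by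
  set R₀ : Fin 2 → Fin 2 → ℝ := fun α β => pSymb a (offPart c) (![i, j] α) (![i, j] β)
  have hfun : schurMap c i j k l a 0 = fun u =>
      (∏ r ∈ ({i, j}ᶜ : Finset (Fin n)), shiftAt i j k l a u r) • (schurLin c i j k l u + R₀) := by
    funext u
    rw [schurMap_zero c]
    congr 1
    ext α β
    exact reducedSymb_zero_shiftAt hij hai haj hki hkj hli hlj u α β
  have hzero : schurLin c i j k l (basePoint c i j a) + R₀ = 0 := by
    ext α β
    rw [Pi.add_apply, Pi.add_apply, ← reducedSymb_zero_shiftAt hij hai haj hki hkj hli hlj]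
    exact reducedSymb_zero_shiftAt_basePoint hij hai haj hki hkj hli hlj heq1 heq2 α β
  have hprod : DifferentiableAt ℝ
      (fun u => ∏ r ∈ ({i, j}ᶜ : Finset (Fin n)), shiftAt i j k l a u r) (basePoint c i j a) := by
    simp only [shiftAt, Pi.add_apply, Finset.sum_apply, Pi.smul_apply, smul_eq_mul]
    fun_prop
  have h := hprod.hasFDerivAt.smul ((schurLin c i j k l).hasFDerivAt.add_const R₀)
  rw [hzero, ContinuousLinearMap.smulRight_zero, add_zero,
    Finset.prod_congr rfl fun r hr => shiftAt_basePoint_of_notMem (Finset.mem_compl.mp hr)] at h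
  rwa [hfun]

theorem schurLin_injective (hC : c i k j * c j l i ≠ c j k i * c i l j) :
    Function.Injective (schurLin c i j k l) := by
  rw [injective_iff_map_eq_zero]
  rintro ⟨η, z⟩ hu
  have e : ∀ α β, schurLin c i j k l (η, z) α β = 0 := fun α β => by rw [hu]; rfl
  have e00 := e 0 0
  have e11 := e 1 1
  have e01 := e 0 1
  have e10 := e 1 0
  simp only [schurLin_apply, Fin.sum_univ_two, Fin.isValue, cons_val_zero, cons_val_one,
    cons_val_fin_one, ↓reduceIte, zero_ne_one, one_ne_zero, zero_add] at e00 e11 e01 e10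
  have hdet : c i k j * c j l i - c j k i * c i l j ≠ 0 := sub_ne_zero.mpr hC
  have hz0 : z 0 = 0 := by
    refine (mul_eq_zero.mp ?_).resolve_left hdet
    linear_combination c j l i * e01 - c i l j * e10
  have hz1 : z 1 = 0 := by
    refine (mul_eq_zero.mp ?_).resolve_left hdet
    linear_combination c i k j * e10 - c j k i * e01
  have hη0 : η 0 = 0 := by simpa [hz0, hz1] using e00
  have hη1 : η 1 = 0 := by simpa [hz0, hz1] using e11
  ext α
  · fin_cases α <;> assumption
  · fin_cases α <;> assumption

theorem schurMap_zero_basePoint (hij : i ≠ j) (hai : a i = 0) (haj : a j = 0)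
    (hki : k ≠ i) (hkj : k ≠ j) (hli : l ≠ i) (hlj : l ≠ j)
    (heq1 : ∑ k ∈ Finset.univ.filter (fun k => k ≠ i ∧ k ≠ j), c i k j * a k = 0)
    (heq2 : ∑ k ∈ Finset.univ.filter (fun k => k ≠ i ∧ k ≠ j), c j k i * a k = 0) :
    schurMap c i j k l a 0 (basePoint c i j a) = 0 := by
  ext α β
  simp only [schurMap_zero c, Pi.smul_apply, smul_eq_mul, Pi.zero_apply,
    reducedSymb_zero_shiftAt_basePoint hij hai haj hki hkj hli hlj heq1 heq2, mul_zero]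

theorem schurBlockDet_zero_basePoint :
    schurBlockDet c i j k l a 0 (basePoint c i j a) = ∏ r ∈ ({i, j}ᶜ : Finset (Fin n)), a r := by
  rw [schurBlockDet, det_reducedSymb_zero_submatrix_compl,
    Finset.prod_congr rfl fun r hr => shiftAt_basePoint_of_notMem (Finset.mem_compl.mp hr)]

theorem isInvertible_fderiv_schurMap (hij : i ≠ j) (hai : a i = 0) (haj : a j = 0)
    (hki : k ≠ i) (hkj : k ≠ j) (hli : l ≠ i) (hlj : l ≠ j)
    (hC : c i k j * c j l i ≠ c j k i * c i l j) (hprod : ∏ r ∈ ({i, j}ᶜ : Finset (Fin n)), a r ≠ 0)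
    (heq1 : ∑ k ∈ Finset.univ.filter (fun k => k ≠ i ∧ k ≠ j), c i k j * a k = 0)
    (heq2 : ∑ k ∈ Finset.univ.filter (fun k => k ≠ i ∧ k ≠ j), c j k i * a k = 0) :
    (fderiv ℝ (fun x : ℝ × ((Fin 2 → ℝ) × (Fin 2 → ℝ)) => schurMap c i j k l a x.1 x.2)
      (0, basePoint c i j a) ∘L .inr ℝ ℝ _).IsInvertible := by
  have hderiv := (((contDiff_schurMap c i j k l a).differentiable one_ne_zero _).hasFDerivAt.comp
    _ (hasFDerivAt_prodMk_right _ _)).unique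
    (hasFDerivAt_schurMap_zero hij hai haj hki hkj hli hlj heq1 heq2)
  rw [hderiv]
  exact ContinuousLinearMap.isInvertible_of_injective
    ((smul_right_injective _ hprod).comp (schurLin_injective hC))
    (by simp [Module.finrank_pi_fintype])

theorem rank_pSymb_le_of_schurMap_eq_zero (hc : IsParamColl n c) (hij : i ≠ j) {t : ℝ}
    {u : (Fin 2 → ℝ) × (Fin 2 → ℝ)} (hdet : schurBlockDet c i j k l a t u ≠ 0)
    (hsol : schurMap c i j k l a t u = 0) :
    (pSymb (scaleOn {i, j} t * shiftAt i j k l a u) (pScale t c)).rank ≤ n - 2 := by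
  have hpair : ∀ p ∉ ({i, j}ᶜ : Finset (Fin n)), ∃ α, ![i, j] α = p := by
    intro p hp
    simp only [Finset.mem_compl, Finset.mem_insert, Finset.mem_singleton, not_not] at hp
    rcases hp with rfl | rfl
    exacts [⟨0, rfl⟩, ⟨1, rfl⟩]
  rw [pSymb_pScale_eq_diagonal_mul hc]
  refine (rank_mul_le_right _ _).trans ((rank_le_card_of_adjSchur_eq_zero hdet ?_).trans ?_)
  · intro p hp q hq
    obtain ⟨α, rfl⟩ := hpair p hp
    obtain ⟨β, rfl⟩ := hpair q hq
    exact congrFun (congrFun hsol α) β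
  · rw [Finset.card_compl, Fintype.card_fin, Finset.card_pair hij]

theorem exists_singular_branch (hc : IsParamColl n c) (hij : i ≠ j) (hki : k ≠ i) (hkj : k ≠ j)
    (hli : l ≠ i) (hlj : l ≠ j) (hC : c i k j * c j l i ≠ c j k i * c i l j)
    (hai : a i = 0) (haj : a j = 0) (hak : ∀ r : Fin n, r ≠ i → r ≠ j → a r ≠ 0)
    (heq1 : ∑ k ∈ Finset.univ.filter (fun k => k ≠ i ∧ k ≠ j), c i k j * a k = 0)
    (heq2 : ∑ k ∈ Finset.univ.filter (fun k => k ≠ i ∧ k ≠ j), c j k i * a k = 0) :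
    ∃ ξ : ℝ → Fin n → ℝ, ξ 0 = a ∧
      ∀ᶠ t in 𝓝 0, ContinuousAt ξ t ∧ (pSymb (ξ t) (pScale t c)).rank ≤ n - 2 := by
  have hprod : ∏ r ∈ ({i, j}ᶜ : Finset (Fin n)), a r ≠ 0 := by
    refine Finset.prod_ne_zero_iff.mpr fun r hr => ?_
    simp only [Finset.mem_compl, Finset.mem_insert, Finset.mem_singleton, not_or] at hr
    exact hak r hr.1 hr.2
  obtain ⟨ψ, hψ₀, hψ⟩ :=
    (contDiff_schurMap c i j k l a).contDiffAt.exists_eventually_continuousAt_implicit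
      (isInvertible_fderiv_schurMap hij hai haj hki hkj hli hlj hC hprod heq1 heq2)
  simp only [schurMap_zero_basePoint hij hai haj hki hkj hli hlj heq1 heq2] at hψ
  have hdet : ∀ᶠ t in 𝓝 0, schurBlockDet c i j k l a t (ψ t) ≠ 0 :=
    ((continuous_schurBlockDet c i j k l a).continuousAt.comp (f := fun t => (t, ψ t)) (x := 0)
      (continuousAt_id.prodMk hψ.self_of_nhds.1)).eventually_ne
      (by simpa [hψ₀, schurBlockDet_zero_basePoint] using hprod)
  refine ⟨fun t => scaleOn {i, j} t * shiftAt i j k l a (ψ t), ?_, ?_⟩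
  · change scaleOn {i, j} 0 * shiftAt i j k l a (ψ 0) = a
    rw [hψ₀, scaleOn_zero_mul_shiftAt hai haj hki hkj hli hlj]
    simp [basePoint]
  filter_upwards [hψ, hdet] with t ⟨hψt, hsol⟩ hdett
  exact ⟨(continuous_scaleOn _).continuousAt.mul
      ((continuous_shiftAt i j k l a).continuousAt.comp hψt),
    rank_pSymb_le_of_schurMap_eq_zero hc hij hdett hsol⟩

end Branch

theorem stmt2_general (n : ℕ) (hn : 5 ≤ n) (c : Fin n → Fin n → Fin n → ℝ)
    (hc : IsParamColl n c) (i j : Fin n) (hij : i ≠ j)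
    (hC1 : ∀ k l : Fin n, k ≠ l → k ≠ i → k ≠ j → l ≠ i → l ≠ j →
      c i k j * c j l i ≠ c j k i * c i l j)
    (a : Fin n → ℝ)
    (hai : a i = 0) (haj : a j = 0)
    (hak : ∀ k : Fin n, k ≠ i → k ≠ j → a k ≠ 0)
    (heq1 : ∑ k ∈ Finset.univ.filter (fun k => k ≠ i ∧ k ≠ j), c i k j * a k = 0)
    (heq2 : ∑ k ∈ Finset.univ.filter (fun k => k ≠ i ∧ k ≠ j), c j k i * a k = 0) :
    ∃ T > (0 : ℝ), ∃ ξ : ℝ → (Fin n → ℝ),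
      ContinuousOn ξ (Set.Ioo 0 T) ∧
      Filter.Tendsto ξ (nhdsWithin 0 (Set.Ioi 0)) (nhds a) ∧
      ∀ t ∈ Set.Ioo (0 : ℝ) T, ξ t ≠ 0 ∧ (pSymb (ξ t) (pScale t c)).rank ≤ n - 2 := by
  obtain ⟨k, hk, l, hl, hkl⟩ :
      ∃ k ∈ ({i, j}ᶜ : Finset (Fin n)), ∃ l ∈ ({i, j}ᶜ : Finset (Fin n)), k ≠ l := by
    refine Finset.one_lt_card.mp ?_
    rw [Finset.card_compl, Fintype.card_fin, Finset.card_pair hij]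
    omega
  simp only [Finset.mem_compl, Finset.mem_insert, Finset.mem_singleton, not_or] at hk hl
  obtain ⟨ξ, hξ₀, hξ⟩ := exists_singular_branch hc hij hk.1 hk.2 hl.1 hl.2
    (hC1 k l hkl hk.1 hk.2 hl.1 hl.2) hai haj hak heq1 heq2
  have hξa : ContinuousAt ξ 0 := hξ.self_of_nhds.1
  have hne : ∀ᶠ t in 𝓝 0, ξ t ≠ 0 :=
    hξa.eventually_ne (hξ₀ ▸ fun h => hak k hk.1 hk.2 (congrFun h k))
  obtain ⟨T, hT, hTξ⟩ := Metric.eventually_nhds_iff.mp (hξ.and hne)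
  have hIoo : ∀ t ∈ Set.Ioo 0 T, dist t 0 < T := fun t ht => by
    rw [Real.dist_eq, sub_zero, abs_of_pos ht.1]
    exact ht.2
  refine ⟨T, hT, ξ, fun t ht => (hTξ (hIoo t ht)).1.1.continuousWithinAt, ?_,
    fun t ht => ⟨(hTξ (hIoo t ht)).2, (hTξ (hIoo t ht)).1.2⟩⟩
  exact hξ₀ ▸ hξa.tendsto.mono_left nhdsWithin_le_nhds

theorem stmt2 (n : ℕ) (hn : 5 ≤ n) (c : Fin n → Fin n → Fin n → ℝ)
    (hc : IsParamColl n c) (i j : Fin n) (hij : i ≠ j)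
    (hC1 : ∀ k l : Fin n, k ≠ l → k ≠ i → k ≠ j → l ≠ i → l ≠ j →
      c i k j * c j l i ≠ c j k i * c i l j)
    (a : Fin n → ℝ)
    (ha_unit : ∑ k, (a k) ^ 2 = 1)
    (hai : a i = 0) (haj : a j = 0)
    (hak : ∀ k : Fin n, k ≠ i → k ≠ j → a k ≠ 0)
    (heq1 : ∑ k ∈ Finset.univ.filter (fun k => k ≠ i ∧ k ≠ j), c i k j * a k = 0)
    (heq2 : ∑ k ∈ Finset.univ.filter (fun k => k ≠ i ∧ k ≠ j), c j k i * a k = 0)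
    (hp : ∀ p : Fin n, p ≠ i → p ≠ j →
      (∑ k ∈ Finset.univ.filter (fun k => k ≠ i ∧ k ≠ j), c p k i * a k ≠ 0) ∨
      (∑ k ∈ Finset.univ.filter (fun k => k ≠ i ∧ k ≠ j), c p k j * a k ≠ 0)) :
    ∃ T > (0 : ℝ), ∃ ξ : ℝ → (Fin n → ℝ),
      ContinuousOn ξ (Set.Ioo 0 T) ∧
      Filter.Tendsto ξ (nhdsWithin 0 (Set.Ioi 0)) (nhds a) ∧
      ∀ t ∈ Set.Ioo (0 : ℝ) T, ξ t ≠ 0 ∧ (pSymb (ξ t) (pScale t c)).rank ≤ n - 2 :=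
  stmt2_general n hn c hc i j hij hC1 a hai haj hak heq1 heq2
end

section
/- Suppose that for some choice of constants α_ijk^l the map u satisfies Σ_{m=1}^{n(n+1)/2} ∂_i u^m(x) ∂_j u^m(x) − g_ij(x) = O(|x|^3) as |x| → 0, for all 1 ≤ i,j ≤ n. Then the constants h_ij^μ satisfy the Gauss equations at the origin: R_ijkl(0) = Σ_{μ=1}^{n(n−1)/2} (h_ik^μ h_jl^μ − h_il^μ h_jk^μ) for all 1 ≤ i,j,k,l ≤ n. -/
open Asymptotics

noncomputable section

/-- First partial derivative `∂_k f (x)`. -/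
def pder {n : ℕ} (f : (Fin n → ℝ) → ℝ) (k : Fin n) (x : Fin n → ℝ) : ℝ :=
  fderiv ℝ f x (Pi.single k 1)

/-- Second partial derivative `∂_a ∂_b f` evaluated at the origin. -/
def pder2 {n : ℕ} (f : (Fin n → ℝ) → ℝ) (a b : Fin n) : ℝ :=
  fderiv ℝ (fun x => fderiv ℝ f x (Pi.single b 1)) 0 (Pi.single a 1)

/-- The curvature tensor of `g` at the origin, in normal coordinates:
`R_ijkl(0) = ½(∂_i∂_l g_jk + ∂_j∂_k g_il − ∂_i∂_k g_jl − ∂_j∂_l g_ik)(0)`. -/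
def curv0 {n : ℕ} (g : (Fin n → ℝ) → Fin n → Fin n → ℝ) (i j k l : Fin n) : ℝ :=
  (1 / 2) * (pder2 (fun x => g x j k) i l + pder2 (fun x => g x i l) j k
    - pder2 (fun x => g x j l) i k - pder2 (fun x => g x i k) j l)

/-- The tangential components of `u`:
`u^l(x) = x^l + (1/6) Σ_{i,j,k} α_ijk^l x^i x^j x^k`. -/
def uTan {n : ℕ} (α : Fin n → Fin n → Fin n → Fin n → ℝ) (l : Fin n)
    (x : Fin n → ℝ) : ℝ :=
  x l + (1 / 6) * ∑ i, ∑ j, ∑ k, α i j k l * x i * x j * x k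

/-- The normal components of `u`: `u^{n+μ}(x) = ½ Σ_{i,j} h_ij^μ x^i x^j`. -/
def uNor {n M : ℕ} (h : Fin n → Fin n → Fin M → ℝ) (μ : Fin M)
    (x : Fin n → ℝ) : ℝ :=
  (1 / 2) * ∑ i, ∑ j, h i j μ * x i * x j

set_option maxHeartbeats 1600000

open Filter Topology Asymptotics in
theorem key_snd {E : Type*} [NormedAddCommGroup E] [NormedSpace ℝ E]
    {f : E → ℝ} {Ω : Set E} (hΩ : IsOpen Ω) (h0 : (0:E) ∈ Ω)
    (hf : ContDiffOn ℝ (⊤ : ℕ∞) f Ω) (hO : f =O[𝓝 0] fun x => ‖x‖ ^ 3) (v w : E) :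
    fderiv ℝ (fun x => fderiv ℝ f x w) 0 v = 0 := by
  have hΩn : Ω ∈ 𝓝 (0:E) := hΩ.mem_nhds h0
  have hca : ∀ x ∈ Ω, ContDiffAt ℝ (⊤ : ℕ∞) f x := fun x hx => hf.contDiffAt (hΩ.mem_nhds hx)
  have hd : ∀ x ∈ Ω, HasFDerivAt f (fderiv ℝ f x) x := fun x hx =>
    ((hca x hx).differentiableAt (by simp)).hasFDerivAt
  have hG : HasFDerivAt (fderiv ℝ f) (fderiv ℝ (fderiv ℝ f) 0) 0 := by
    have h2 : ContDiffAt ℝ (⊤ : ℕ∞) (fderiv ℝ f) 0 := (hca 0 h0).fderiv_right (m := (⊤ : ℕ∞)) (by simp)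
    exact (h2.differentiableAt (by simp)).hasFDerivAt
  set G := fderiv ℝ (fderiv ℝ f) 0 with hGdef
  -- value vanishes
  have hf0 : f 0 = 0 := by
    have hO' : f =O[𝓝 (0:E)] fun x => ‖x - 0‖ ^ 3 := by simpa using hO
    exact hO'.eq_zero_of_norm_pow (by norm_num)
  -- first derivative vanishes
  have hd0 : HasFDerivAt f (0 : E →L[ℝ] ℝ) 0 := by
    rw [hasFDerivAt_iff_isLittleO_nhds_zero]
    simp only [hf0, zero_add, sub_zero, map_zero, ContinuousLinearMap.zero_apply]
    exact hO.trans_isLittleO (isLittleO_norm_pow_id (by norm_num))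
  have hfd0 : fderiv ℝ f 0 = 0 := hd0.fderiv
  -- G v v = 0 on a small ball
  obtain ⟨r, hr, hball⟩ : ∃ r > 0, Metric.ball (0:E) r ⊆ Ω := Metric.mem_nhds_iff.1 hΩn
  have hGvv_small : ∀ u : E, ‖u‖ < r → G u u = 0 := by
    intro u hu
    have hconv : Convex ℝ (Metric.ball (0:E) r) := convex_ball 0 r
    have hint : interior (Metric.ball (0:E) r) = Metric.ball (0:E) r :=
      Metric.isOpen_ball.interior_eq
    have hTA := hconv.taylor_approx_two_segment
      (f := f) (f' := fderiv ℝ f) (f'' := G)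
      (fun x hx => hd x (hball (hint ▸ hx)))
      (Metric.mem_ball_self hr)
      (hG.hasFDerivWithinAt) (v := 0) (w := u)
      (by rw [hint]; simpa using Metric.mem_ball_self (x := (0:E)) hr)
      (by rw [hint, Metric.mem_ball, dist_eq_norm]; simpa using hu)
    simp only [smul_zero, add_zero, zero_add, hfd0, ContinuousLinearMap.zero_apply,
      map_zero, ContinuousLinearMap.zero_apply, hf0, sub_zero, smul_eq_mul,
      mul_zero] at hTA
    -- hTA : (fun h => f (h • u) - (h^2/2) * G u u) =o[𝓝[>] 0] fun h => h ^ 2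
    have hcomp : (fun h : ℝ => f (h • u)) =o[𝓝[>] (0:ℝ)] fun h => h ^ 2 := by
      have ht : Tendsto (fun h : ℝ => h • u) (𝓝[>] (0:ℝ)) (𝓝 0) := by
        have : Continuous fun h : ℝ => h • u := by continuity
        have h := (this.tendsto 0).mono_left (nhdsWithin_le_nhds (s := Set.Ioi (0:ℝ)))
        simpa using h
      have h1 : (fun h : ℝ => f (h • u)) =O[𝓝[>] (0:ℝ)] fun h => ‖h • u‖ ^ 3 :=
        hO.comp_tendsto ht
      refine h1.trans_isLittleO ?_
      have h2e : (fun h : ℝ => ‖h • u‖ ^ 3) = fun h => ‖u‖ ^ 3 * |h| ^ 3 := by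
        funext h
        simp [norm_smul, Real.norm_eq_abs, mul_pow]
        ring
      have h2 : (fun h : ℝ => ‖h • u‖ ^ 3) =O[𝓝[>] (0:ℝ)] fun h => |h| ^ 3 := by
        rw [h2e]
        exact (isBigO_refl _ _).const_mul_left _
      refine h2.trans_isLittleO ?_
      have h3 : (fun h : ℝ => |h| ^ 3) =o[𝓝 (0:ℝ)] fun h => h ^ 2 := by
        have := isLittleO_norm_pow_norm_pow (E' := ℝ) (m := 2) (n := 3) (by norm_num)
        simpa [Real.norm_eq_abs, abs_pow, sq_abs] using this
      exact h3.mono nhdsWithin_le_nhds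
    have hfin : (fun h : ℝ => (h ^ 2 / 2) * G u u) =o[𝓝[>] (0:ℝ)] fun h => h ^ 2 := by
      have := hcomp.sub hTA
      simpa using this
    -- conclude G u u = 0
    by_contra hne
    rw [isLittleO_iff] at hfin
    have hε : (0:ℝ) < |G u u| / 4 := by positivity
    obtain ⟨h, hh, hhpos⟩ := ((hfin hε).and self_mem_nhdsWithin).exists
    have hhpos' : (0:ℝ) < h := hhpos
    have h2pos : (0:ℝ) < h ^ 2 := by positivity
    rw [Real.norm_eq_abs, Real.norm_eq_abs, abs_mul, abs_div, abs_two,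
      abs_of_pos h2pos] at hh
    nlinarith [abs_pos.2 hne, mul_pos h2pos (abs_pos.2 hne)]
  -- G u u = 0 for all u by scaling
  have hGvv : ∀ u : E, G u u = 0 := by
    intro u
    have hc : (0:ℝ) < r / (2 * (‖u‖ + 1)) := by positivity
    have hnorm : ‖(r / (2 * (‖u‖ + 1))) • u‖ < r := by
      rw [norm_smul, Real.norm_eq_abs, abs_of_pos hc]
      have h1 : ‖u‖ + 1 ≤ 2 * (‖u‖ + 1) := by nlinarith [norm_nonneg u]
      calc r / (2 * (‖u‖ + 1)) * ‖u‖ < r / (2 * (‖u‖ + 1)) * (2 * (‖u‖ + 1)) := by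
            apply mul_lt_mul_of_pos_left _ hc
            nlinarith [norm_nonneg u]
        _ = r := by field_simp
      
    have hz := hGvv_small _ hnorm
    have hc2 : (r / (2 * (‖u‖ + 1))) ≠ 0 := ne_of_gt hc
    simp only [map_smul, ContinuousLinearMap.smul_apply, smul_eq_mul] at hz
    rcases mul_eq_zero.1 hz with h' | h'
    · exact absurd h' hc2
    rcases mul_eq_zero.1 h' with h'' | h''
    · exact absurd h'' hc2
    exact h''
  -- symmetry and polarization
  have hsym : ∀ a b : E, G a b = G b a := by
    intro a b
    refine second_derivative_symmetric_of_eventually (f := f) ?_ hG a b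
    filter_upwards [hΩn] with y hy using hd y hy
  have hGvw : G v w = 0 := by
    have h1 := hGvv (v + w)
    have h2 := hGvv v
    have h3 := hGvv w
    have hx := hsym v w
    simp only [map_add, ContinuousLinearMap.add_apply] at h1
    linarith
  -- conclude
  have hcomp : HasFDerivAt (fun x => fderiv ℝ f x w)
      ((ContinuousLinearMap.apply ℝ ℝ w).comp G) 0 :=
    (ContinuousLinearMap.apply ℝ ℝ w).hasFDerivAt.comp 0 hG
  rw [hcomp.fderiv]
  simpa using hGvw

abbrev prj {n : ℕ} (a : Fin n) : (Fin n → ℝ) →L[ℝ] ℝ := ContinuousLinearMap.proj a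

lemma pder_uNor {n M : ℕ} (h : Fin n → Fin n → Fin M → ℝ)
    (hs : ∀ i j μ, h i j μ = h j i μ) (μ : Fin M) (m : Fin n) (x : Fin n → ℝ) :
    pder (uNor h μ) m x = ∑ a, h m a μ * x a := by
  have hco : ∀ (a : Fin n), HasFDerivAt (fun y : Fin n → ℝ => y a)
      (prj a) x := fun a => hasFDerivAt_apply a x
  have hterm : ∀ i j : Fin n, HasFDerivAt (fun y : Fin n → ℝ => h i j μ * y i * y j)
      ((h i j μ * x i) • prj j
        + x j • (h i j μ • prj i)) x := fun i j =>
    ((hco i).const_mul _).mul (hco j)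
  have hD : HasFDerivAt (uNor h μ)
      ((1/2 : ℝ) • ∑ i, ∑ j, ((h i j μ * x i) • prj j
        + x j • (h i j μ • prj i))) x := by
    exact HasFDerivAt.const_mul
      (HasFDerivAt.fun_sum fun i _ => HasFDerivAt.fun_sum fun j _ => hterm i j) (1/2 : ℝ)
  rw [pder, hD.fderiv]
  simp only [ContinuousLinearMap.smul_apply, ContinuousLinearMap.sum_apply,
    ContinuousLinearMap.add_apply, ContinuousLinearMap.proj_apply,
    Pi.single_apply, smul_eq_mul, mul_ite, ite_mul, mul_one, mul_zero, zero_mul,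
    one_mul, Finset.sum_ite_eq, Finset.sum_ite_eq', Finset.mem_univ, if_true]
  simp only [Finset.sum_add_distrib]
  have e0 : ∑ x1 : Fin n, ∑ x2 : Fin n, (if x1 = m then x x2 * h x1 x2 μ else 0)
      = ∑ x2 : Fin n, x x2 * h m x2 μ := by
    rw [Finset.sum_comm]
    simp [Finset.sum_ite_eq']
  rw [e0]
  simp only [Finset.sum_ite_eq', Finset.mem_univ, if_true]
  have e1 : ∑ x1 : Fin n, h x1 m μ * x x1 = ∑ a, h m a μ * x a :=
    Finset.sum_congr rfl fun a _ => by rw [hs]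
  have e2 : ∑ x2 : Fin n, x x2 * h m x2 μ = ∑ a, h m a μ * x a :=
    Finset.sum_congr rfl fun a _ => by ring
  rw [e1, e2]
  ring


lemma pder_uTan {n : ℕ} (α : Fin n → Fin n → Fin n → Fin n → ℝ)
    (hα : ∀ i j k l : Fin n, α i j k l = α j i k l ∧ α i j k l = α i k j l)
    (l m : Fin n) (x : Fin n → ℝ) :
    pder (uTan α l) m x = (if l = m then 1 else 0)
      + (1/2) * ∑ a, ∑ b, α m a b l * x a * x b := by
  have hco : ∀ (a : Fin n), HasFDerivAt (fun y : Fin n → ℝ => y a)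
      (prj a) x := fun a => hasFDerivAt_apply a x
  have hterm : ∀ i j k : Fin n,
      HasFDerivAt (fun y : Fin n → ℝ => α i j k l * y i * y j * y k)
        ((α i j k l * x i * x j) • prj k
          + x k • ((α i j k l * x i) • prj j + x j • (α i j k l • prj i))) x :=
    fun i j k => (((hco i).const_mul _).mul (hco j)).mul (hco k)
  have hD : HasFDerivAt (uTan α l)
      (prj l + (1/6 : ℝ) • ∑ i, ∑ j, ∑ k, ((α i j k l * x i * x j) • prj k
          + x k • ((α i j k l * x i) • prj j + x j • (α i j k l • prj i)))) x := by
    exact (hco l).add (HasFDerivAt.const_mul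
      (HasFDerivAt.fun_sum fun i _ => HasFDerivAt.fun_sum fun j _ =>
        HasFDerivAt.fun_sum fun k _ => hterm i j k) (1/6 : ℝ))
  rw [pder, hD.fderiv]
  simp only [ContinuousLinearMap.add_apply, ContinuousLinearMap.smul_apply,
    ContinuousLinearMap.sum_apply, ContinuousLinearMap.proj_apply,
    Pi.single_apply, smul_eq_mul, mul_ite, ite_mul, mul_one, mul_zero, zero_mul,
    one_mul, mul_add, Finset.sum_add_distrib]
  have sw12 : ∀ p q r s : Fin n, α p q r s = α q p r s := fun p q r s => (hα p q r s).1
  have sw23 : ∀ p q r s : Fin n, α p q r s = α p r q s := fun p q r s => (hα p q r s).2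
  have hT3 : (∑ x1 : Fin n, ∑ x2 : Fin n, ∑ x3 : Fin n,
        if x3 = m then α x1 x2 x3 l * x x1 * x x2 else 0)
      = ∑ a, ∑ b, α m a b l * x a * x b := by
    simp only [Finset.sum_ite_eq', Finset.mem_univ, if_true]
    refine Finset.sum_congr rfl fun a _ => Finset.sum_congr rfl fun b _ => ?_
    rw [sw23 a b m l, sw12 a m b l]
  have hT2 : (∑ x1 : Fin n, ∑ x2 : Fin n, ∑ x3 : Fin n,
        if x2 = m then x x3 * (α x1 x2 x3 l * x x1) else 0)
      = ∑ a, ∑ b, α m a b l * x a * x b := by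
    have step : ∀ x1 : Fin n, (∑ x2 : Fin n, ∑ x3 : Fin n,
        if x2 = m then x x3 * (α x1 x2 x3 l * x x1) else 0)
        = ∑ x3 : Fin n, x x3 * (α x1 m x3 l * x x1) := fun x1 => by
      rw [Finset.sum_comm]
      simp [Finset.sum_ite_eq']
    simp only [step]
    refine Finset.sum_congr rfl fun a _ => Finset.sum_congr rfl fun b _ => ?_
    rw [sw12 a m b l]
    ring
  have hT1 : (∑ x1 : Fin n, ∑ x2 : Fin n, ∑ x3 : Fin n,
        if x1 = m then x x3 * (x x2 * α x1 x2 x3 l) else 0)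
      = ∑ a, ∑ b, α m a b l * x a * x b := by
    have step : ∀ x1 : Fin n, (∑ x2 : Fin n, ∑ x3 : Fin n,
        if x1 = m then x x3 * (x x2 * α x1 x2 x3 l) else 0)
        = if x1 = m then ∑ x2 : Fin n, ∑ x3 : Fin n, x x3 * (x x2 * α x1 x2 x3 l) else 0 :=
      fun x1 => by split <;> simp
    simp only [step, Finset.sum_ite_eq', Finset.mem_univ, if_true]
    refine Finset.sum_congr rfl fun a _ => Finset.sum_congr rfl fun b _ => ?_
    ring
  rw [hT3, hT2, hT1]
  ring

lemma contDiff_uNor {n M : ℕ} (h : Fin n → Fin n → Fin M → ℝ) (μ : Fin M) :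
    ContDiff ℝ (⊤ : ℕ∞) (uNor h μ) := by
  unfold uNor
  apply ContDiff.mul contDiff_const
  apply ContDiff.sum (fun i _ => ?_)
  apply ContDiff.sum (fun j _ => ?_)
  exact ((contDiff_const.mul (contDiff_apply ℝ ℝ i)).mul (contDiff_apply ℝ ℝ j))


open Filter Topology Asymptotics in
lemma pder2_formula {n : ℕ} {Ω : Set (Fin n → ℝ)} (hΩ : IsOpen Ω) (h0 : (0 : Fin n → ℝ) ∈ Ω)
    {G : (Fin n → ℝ) → ℝ} (hG : ContDiffOn ℝ (⊤ : ℕ∞) G Ω) (C : Fin n → Fin n → ℝ) (c0 : ℝ)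
    (hO : (fun x => G x - (c0 + ∑ p, ∑ q, C p q * x p * x q)) =O[𝓝 0] fun x => ‖x‖ ^ 3)
    (a b : Fin n) : pder2 G a b = C a b + C b a := by
  classical
  set C2 : Fin n → Fin n → Fin 1 → ℝ := fun p q _ => C p q + C q p with hC2
  have hC2s : ∀ p q μ, C2 p q μ = C2 q p μ := by intro p q μ; simp only [hC2]; ring
  have hQeq : ∀ x : Fin n → ℝ, (∑ p, ∑ q, C p q * x p * x q) = uNor C2 0 x := by
    intro x
    rw [uNor]
    have h1 : ∑ p : Fin n, ∑ q : Fin n, C q p * x p * x q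
        = ∑ p : Fin n, ∑ q : Fin n, C p q * x p * x q := by
      rw [Finset.sum_comm]
      exact Finset.sum_congr rfl fun p _ => Finset.sum_congr rfl fun q _ => by ring
    have h2 : ∑ p : Fin n, ∑ q : Fin n, C2 p q 0 * x p * x q
        = (∑ p : Fin n, ∑ q : Fin n, C p q * x p * x q)
          + ∑ p : Fin n, ∑ q : Fin n, C q p * x p * x q := by
      simp only [hC2, add_mul, Finset.sum_add_distrib]
    rw [h2, h1]
    ring
  set f : (Fin n → ℝ) → ℝ := fun x => G x - (c0 + uNor C2 0 x) with hf
  have hOf : f =O[𝓝 0] fun x => ‖x‖ ^ 3 := by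
    have he : (fun x : Fin n → ℝ => G x - (c0 + ∑ p, ∑ q, C p q * x p * x q)) = f := by
      funext x
      rw [hf]
      simp only []
      rw [← hQeq x]
    exact he ▸ hO
  have hfs : ContDiffOn ℝ (⊤ : ℕ∞) f Ω :=
    hG.sub ((contDiff_const.add (contDiff_uNor C2 0)).contDiffOn)
  have hca : ∀ x ∈ Ω, ContDiffAt ℝ (⊤ : ℕ∞) f x := fun x hx => hfs.contDiffAt (hΩ.mem_nhds hx)
  have hfd : ∀ x ∈ Ω, DifferentiableAt ℝ f x := fun x hx =>
    (hca x hx).differentiableAt (by simp)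
  have hQdiff : ∀ x, DifferentiableAt ℝ (uNor C2 0) x := fun x =>
    ((contDiff_uNor C2 0).differentiable (by simp)).differentiableAt
  have hev : ∀ x ∈ Ω, fderiv ℝ G x (Pi.single b 1)
      = fderiv ℝ f x (Pi.single b 1) + ∑ p, C2 b p 0 * x p := by
    intro x hx
    have hG' : G = fun y => f y + (c0 + uNor C2 0 y) := by
      funext y; rw [hf]; ring
    conv_lhs => rw [hG']
    rw [fderiv_fun_add (hfd x hx) (g := fun y => c0 + uNor C2 0 y) ((differentiableAt_const c0).add (hQdiff x)),
      ContinuousLinearMap.add_apply]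
    congr 1
    rw [fderiv_const_add]
    have := pder_uNor C2 hC2s 0 b x
    rw [pder] at this
    exact this
  have h2d : ContDiffAt ℝ (⊤ : ℕ∞) (fderiv ℝ f) 0 := (hca 0 h0).fderiv_right (m := (⊤ : ℕ∞)) (by simp)
  have hGd : HasFDerivAt (fderiv ℝ f) (fderiv ℝ (fderiv ℝ f) 0) 0 :=
    (h2d.differentiableAt (by simp)).hasFDerivAt
  have h1 : HasFDerivAt (fun x => fderiv ℝ f x (Pi.single b 1))
      ((ContinuousLinearMap.apply ℝ ℝ (Pi.single b 1)).comp (fderiv ℝ (fderiv ℝ f) 0)) 0 := by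
    exact (ContinuousLinearMap.apply ℝ ℝ (Pi.single b 1)).hasFDerivAt.comp 0 hGd
  have hlin : HasFDerivAt (fun x : Fin n → ℝ => ∑ p, C2 b p 0 * x p)
      (∑ p, C2 b p 0 • prj p) 0 :=
    HasFDerivAt.fun_sum fun p _ => (hasFDerivAt_apply p 0).const_mul _
  have hkey := key_snd hΩ h0 hfs hOf (Pi.single a 1) (Pi.single b 1)
  have hsum := h1.fun_add hlin
  have hE : (fun x => fderiv ℝ G x (Pi.single b 1))
      =ᶠ[𝓝 (0 : Fin n → ℝ)] fun x => fderiv ℝ f x (Pi.single b 1) + ∑ p, C2 b p 0 * x p := by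
    filter_upwards [hΩ.mem_nhds h0] with y hy using hev y hy
  rw [pder2, hE.fderiv_eq, hsum.fderiv, ContinuousLinearMap.add_apply, ← h1.fderiv, hkey,
    zero_add]
  simp only [ContinuousLinearMap.sum_apply, ContinuousLinearMap.smul_apply,
    ContinuousLinearMap.proj_apply, Pi.single_apply, smul_eq_mul, mul_ite, mul_one, mul_zero,
    Finset.sum_ite_eq', Finset.mem_univ, if_true, hC2]
  ring

lemma pointwise_id {n M : ℕ} (α : Fin n → Fin n → Fin n → Fin n → ℝ)
    (hα : ∀ i j k l : Fin n, α i j k l = α j i k l ∧ α i j k l = α i k j l)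
    (h : Fin n → Fin n → Fin M → ℝ) (hs : ∀ i j μ, h i j μ = h j i μ)
    (i j : Fin n) (x : Fin n → ℝ) :
    (∑ l, pder (uTan α l) i x * pder (uTan α l) j x)
      + (∑ μ, pder (uNor h μ) i x * pder (uNor h μ) j x)
    = (if i = j then (1:ℝ) else 0)
      + (∑ p, ∑ q, ((1/2) * (α i p q j + α j p q i) + ∑ μ, h i p μ * h j q μ) * x p * x q)
      + ∑ l, ((1/2) * ∑ a, ∑ b, α i a b l * x a * x b)
          * ((1/2) * ∑ a, ∑ b, α j a b l * x a * x b) := by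
  classical
  simp only [pder_uTan α hα, pder_uNor h hs]
  conv_lhs => simp only [add_mul, mul_add, Finset.sum_add_distrib]
  have hT1 : ∑ l : Fin n, (if l = i then (1:ℝ) else 0) * (if l = j then (1:ℝ) else 0)
      = if i = j then (1:ℝ) else 0 := by
    simp only [ite_mul, one_mul, zero_mul, Finset.sum_ite_eq', Finset.mem_univ, if_true]
  have hT2 : ∑ l : Fin n, (if l = i then (1:ℝ) else 0)
      * ((1/2) * ∑ a, ∑ b, α j a b l * x a * x b)
      = (1/2) * ∑ a, ∑ b, α j a b i * x a * x b := by
    simp only [ite_mul, one_mul, zero_mul, Finset.sum_ite_eq', Finset.mem_univ, if_true]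
  have hT3 : ∑ l : Fin n, ((1/2) * ∑ a, ∑ b, α i a b l * x a * x b)
      * (if l = j then (1:ℝ) else 0)
      = (1/2) * ∑ a, ∑ b, α i a b j * x a * x b := by
    simp only [mul_ite, mul_one, mul_zero, Finset.sum_ite_eq', Finset.mem_univ, if_true]
  have hBB : ∑ μ, (∑ p, h i p μ * x p) * (∑ q, h j q μ * x q)
      = ∑ p, ∑ q, (∑ μ, h i p μ * h j q μ) * x p * x q := by
    calc ∑ μ, (∑ p, h i p μ * x p) * (∑ q, h j q μ * x q)
        = ∑ μ, ∑ p, ∑ q, h i p μ * h j q μ * x p * x q := by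
          refine Finset.sum_congr rfl fun μ _ => ?_
          rw [Finset.sum_mul]
          refine Finset.sum_congr rfl fun p _ => ?_
          rw [Finset.mul_sum]
          refine Finset.sum_congr rfl fun q _ => by ring
      _ = ∑ p, ∑ q, ∑ μ, h i p μ * h j q μ * x p * x q := by
          rw [Finset.sum_comm]
          exact Finset.sum_congr rfl fun p _ => Finset.sum_comm
      _ = ∑ p, ∑ q, (∑ μ, h i p μ * h j q μ) * x p * x q := by
          refine Finset.sum_congr rfl fun p _ => Finset.sum_congr rfl fun q _ => ?_
          simp only [Finset.sum_mul]
  rw [hT1, hT2, hT3, hBB]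
  have hexp : ∑ p, ∑ q, (((1:ℝ)/2) * (α i p q j + α j p q i) + ∑ μ, h i p μ * h j q μ)
        * x p * x q
      = ((1/2) * ∑ a, ∑ b, α i a b j * x a * x b)
        + ((1/2) * ∑ a, ∑ b, α j a b i * x a * x b)
        + ∑ p, ∑ q, (∑ μ, h i p μ * h j q μ) * x p * x q := by
    simp only [Finset.mul_sum]
    rw [← Finset.sum_add_distrib, ← Finset.sum_add_distrib]
    refine Finset.sum_congr rfl fun p _ => ?_
    rw [← Finset.sum_add_distrib, ← Finset.sum_add_distrib]
    refine Finset.sum_congr rfl fun q _ => by ring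
  rw [hexp]
  ring


open Filter Topology Asymptotics in
theorem stmt6 (n : ℕ) (hn : 2 ≤ n)
    (Ω : Set (Fin n → ℝ)) (hΩ : IsOpen Ω) (h0 : (0 : Fin n → ℝ) ∈ Ω)
    (g : (Fin n → ℝ) → Fin n → Fin n → ℝ)
    (hg_smooth : ∀ i j : Fin n, ContDiffOn ℝ (⊤ : ℕ∞) (fun x => g x i j) Ω)
    (hg_symm : ∀ x ∈ Ω, ∀ i j : Fin n, g x i j = g x j i)
    (hg_pos : ∀ x ∈ Ω, (Matrix.of (g x)).PosDef)
    (hg0 : ∀ i j : Fin n, g 0 i j = if i = j then (1 : ℝ) else 0)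
    (hg1 : ∀ i j k : Fin n, pder (fun x => g x i j) k 0 = 0)
    (h : Fin n → Fin n → Fin (n * (n - 1) / 2) → ℝ)
    (hsymm : ∀ i j μ, h i j μ = h j i μ)
    (α : Fin n → Fin n → Fin n → Fin n → ℝ)
    (hα : ∀ i j k l : Fin n, α i j k l = α j i k l ∧ α i j k l = α i k j l)
    (hBigO : ∀ i j : Fin n,
      (fun x : Fin n → ℝ =>
          (∑ l, pder (uTan α l) i x * pder (uTan α l) j x)
            + (∑ μ, pder (uNor h μ) i x * pder (uNor h μ) j x) - g x i j)
        =O[nhds 0] (fun x : Fin n → ℝ => ‖x‖ ^ 3)) :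
    ∀ i j k l : Fin n,
      curv0 g i j k l = ∑ μ, (h i k μ * h j l μ - h i l μ * h j k μ) := by
  classical
  -- the second derivatives of g at the origin
  have hform : ∀ i j a b : Fin n, pder2 (fun x => g x i j) a b
      = (α i a b j + α j a b i)
        + ∑ μ, (h i a μ * h j b μ + h i b μ * h j a μ) := by
    intro i j a b
    set C : Fin n → Fin n → ℝ :=
      fun p q => (1/2) * (α i p q j + α j p q i) + ∑ μ, h i p μ * h j q μ with hC
    have hx : ∀ a : Fin n, (fun x : Fin n → ℝ => x a) =O[𝓝 (0 : Fin n → ℝ)] fun x => ‖x‖ :=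
      fun a => isBigO_of_le _ fun x => by simpa using norm_le_pi_norm x a
    have hA : ∀ m l : Fin n,
        (fun x : Fin n → ℝ => (1/2) * ∑ a, ∑ b, α m a b l * x a * x b)
          =O[𝓝 (0 : Fin n → ℝ)] fun x => ‖x‖ * ‖x‖ := by
      intro m l
      apply IsBigO.const_mul_left
      apply IsBigO.fun_sum
      intro a _
      apply IsBigO.fun_sum
      intro b _
      exact ((hx a).const_mul_left _).mul (hx b)
    have hRem : (fun x : Fin n → ℝ => ∑ l, ((1/2) * ∑ a, ∑ b, α i a b l * x a * x b)
          * ((1/2) * ∑ a, ∑ b, α j a b l * x a * x b)) =O[𝓝 (0 : Fin n → ℝ)]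
        fun x => ‖x‖ ^ 3 := by
      have h4 : (fun x : Fin n → ℝ => ∑ l, ((1/2) * ∑ a, ∑ b, α i a b l * x a * x b)
            * ((1/2) * ∑ a, ∑ b, α j a b l * x a * x b)) =O[𝓝 (0 : Fin n → ℝ)]
          fun x => (‖x‖ * ‖x‖) * (‖x‖ * ‖x‖) :=
        IsBigO.fun_sum fun l _ => (hA i l).mul (hA j l)
      refine h4.trans ?_
      rw [isBigO_iff]
      refine ⟨1, ?_⟩
      filter_upwards [Metric.closedBall_mem_nhds (0 : Fin n → ℝ) one_pos] with x hxm
      have hx1 : ‖x‖ ≤ 1 := by rwa [Metric.mem_closedBall, dist_zero_right] at hxm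
      have hx0 : (0:ℝ) ≤ ‖x‖ := norm_nonneg x
      rw [Real.norm_eq_abs, Real.norm_eq_abs, abs_of_nonneg (by positivity),
        abs_of_nonneg (by positivity), one_mul]
      have e : ‖x‖ * ‖x‖ * (‖x‖ * ‖x‖) = ‖x‖ ^ 3 * ‖x‖ := by ring
      rw [e]
      calc ‖x‖ ^ 3 * ‖x‖ ≤ ‖x‖ ^ 3 * 1 :=
            mul_le_mul_of_nonneg_left hx1 (by positivity)
        _ = ‖x‖ ^ 3 := mul_one _
    have hO : (fun x : Fin n → ℝ => g x i j
        - ((if i = j then (1:ℝ) else 0) + ∑ p, ∑ q, C p q * x p * x q))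
        =O[𝓝 (0 : Fin n → ℝ)] fun x => ‖x‖ ^ 3 := by
      have hsub := hRem.sub (hBigO i j)
      have heq : (fun x : Fin n → ℝ =>
          (∑ l, ((1/2) * ∑ a, ∑ b, α i a b l * x a * x b)
            * ((1/2) * ∑ a, ∑ b, α j a b l * x a * x b))
          - ((∑ l, pder (uTan α l) i x * pder (uTan α l) j x)
            + (∑ μ, pder (uNor h μ) i x * pder (uNor h μ) j x) - g x i j))
          = fun x : Fin n → ℝ => g x i j
            - ((if i = j then (1:ℝ) else 0) + ∑ p, ∑ q, C p q * x p * x q) := by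
        funext x
        have hpt := pointwise_id α hα h hsymm i j x
        simp only [hC]
        linarith
      exact heq ▸ hsub
    have hP := pder2_formula hΩ h0 (hg_smooth i j) C _ hO a b
    rw [hP, hC]
    simp only []
    rw [(hα i b a j).2, (hα j b a i).2, Finset.sum_add_distrib]
    ring
  intro i j k l
  rw [curv0, hform j k i l, hform i l j k, hform j l i k, hform i k j l]
  have sw12 : ∀ p q r s : Fin n, α p q r s = α q p r s := fun p q r s => (hα p q r s).1
  have sw23 : ∀ p q r s : Fin n, α p q r s = α p r q s := fun p q r s => (hα p q r s).2
  have hE1 : α j i k l = α i j k l := sw12 j i k l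
  have hE2 : α l i k j = α k i l j := by
    rw [sw12 l i k j, sw23 i l k j, sw12 i k l j]
  have hE3 : α i j l k = α j i l k := sw12 i j l k
  have hE4 : α k j l i = α l j k i := by
    rw [sw12 k j l i, sw23 j k l i, sw12 j l k i]
  rw [hE1, hE2, hE3, hE4]
  have hS : ((∑ μ, (h j i μ * h k l μ + h j l μ * h k i μ))
        + (∑ μ, (h i j μ * h l k μ + h i k μ * h l j μ)))
        - (∑ μ, (h j i μ * h l k μ + h j k μ * h l i μ))
        - (∑ μ, (h i j μ * h k l μ + h i l μ * h k j μ))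
      = 2 * ∑ μ, (h i k μ * h j l μ - h i l μ * h j k μ) := by
    rw [← Finset.sum_add_distrib, ← Finset.sum_sub_distrib, ← Finset.sum_sub_distrib,
      Finset.mul_sum]
    refine Finset.sum_congr rfl fun μ _ => ?_
    rw [hsymm j i, hsymm k i, hsymm l i, hsymm k j, hsymm l j, hsymm l k]
    ring
  linarith [hS]
end
end
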